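/- arXiv:1810.08535 — 8 statements merged into one kernel-verified Lean document; each statement's English description precedes it below -/
import Mathlib

section
/- For every t > 0 and v ∈ ℝ, one has θ₃(v | it) = ∑_{n∈ℤ} e^{-πtn²} e^{2πinv} = t^{-1/2} ∑_{n∈ℤ} e^{-π(n-v)²/t}. -/
open Real Complex

theorem theta3_modular_inversion (t v : ℝ) (ht : 0 < t) :
    ∑' n : ℤ, Complex.exp (-(π : ℂ) * t * n ^ 2 + 2 * π * Complex.I * n * v)
      = ((1 / Real.sqrt t) * ∑' n : ℤ, Real.exp (-π * (n - v) ^ 2 / t) : ℝ) := by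
  have ht' : 0 < ((t : ℂ)).re := by simpa using ht
  have key := Complex.tsum_exp_neg_quadratic ht' (Complex.I * v)
  have hL : (∑' n : ℤ, Complex.exp (-(π : ℂ) * t * n ^ 2 + 2 * π * Complex.I * n * v))
      = ∑' n : ℤ, Complex.exp (-(π : ℂ) * t * n ^ 2 + 2 * π * (Complex.I * v) * n) := by
    congr 1; funext n; ring_nf
  rw [hL, key]
  have hsq : ∀ n : ℤ, ((n : ℂ) + Complex.I * (Complex.I * v)) ^ 2 = (((n : ℝ) - v : ℝ) : ℂ) ^ 2 := by
    intro n
    push_cast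
    rw [← mul_assoc, Complex.I_mul_I]
    ring
  have hterm : ∀ n : ℤ, Complex.exp (-(π : ℂ) / t * ((n : ℂ) + Complex.I * (Complex.I * v)) ^ 2)
      = ((Real.exp (-π * ((n : ℝ) - v) ^ 2 / t) : ℝ) : ℂ) := by
    intro n
    rw [hsq n, show -(π : ℂ) / t * (((n : ℝ) - v : ℝ) : ℂ) ^ 2
        = ((-π * ((n : ℝ) - v) ^ 2 / t : ℝ) : ℂ) by push_cast; ring, Complex.ofReal_exp]
  have hcoef : (1 / (t : ℂ) ^ (1 / 2 : ℂ)) = ((1 / Real.sqrt t : ℝ) : ℂ) := by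
    rw [Real.sqrt_eq_rpow]
    push_cast [Complex.ofReal_cpow ht.le]
    norm_num
  rw [tsum_congr hterm, hcoef, ← Complex.ofReal_tsum, ← Complex.ofReal_mul]
end

section
/- Let a > 0 and 0 < t < a, and let v ∈ ℝ with nearest-integer part ⟦v⟧ ∈ [-1/2, 1/2). Then √t · e^{π⟦v⟧²/t} · θ₃(v | it) = 1 + 2e^{-π/t} cosh(2π⟦v⟧/t) + R, where |R| ≤ 2e^{-2π/t}/(1 - e^{-π/a}). -/
/-!
Jacobi's transformation formula (Poisson summation for the Gaussian) turns `√t · θ₃(v | it)` into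
`∑ₙ exp(-π (n - v)² / t)`. Writing `n = m + k` and multiplying by `exp(π r² / t)` leaves the terms
`exp(-π (k² - 2 k r) / t)`; those with `k = 0, ±1` give `1 + 2 e^{-π/t} cosh(2π r / t)`. Since
`|r| ≤ 1/2`, the exponent of the term `±(n + 1)` is at most `-2π n / t`, so the remaining terms are
dominated by two geometric series of ratio `e^{-2π/t} ≤ e^{-π/a}`.
-/

open Real Complex

lemma sqrt_mul_tsum_cexp_eq_tsum_exp {t : ℝ} (ht : 0 < t) (v : ℝ) :
    (√t : ℂ) * ∑' n : ℤ, cexp (-(π : ℂ) * t * n ^ 2 + 2 * π * I * n * v) =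
      ↑(∑' n : ℤ, Real.exp (-π * (n - v) ^ 2 / t)) := by
  have hsqrt : (t : ℂ) ^ (1 / 2 : ℂ) = (√t : ℂ) := by
    rw [Real.sqrt_eq_rpow, Complex.ofReal_cpow ht.le]
    norm_num
  have hjacobi := Complex.tsum_exp_neg_quadratic (a := t) (by simpa using ht) (I * v)
  rw [hsqrt] at hjacobi
  calc (√t : ℂ) * ∑' n : ℤ, cexp (-(π : ℂ) * t * n ^ 2 + 2 * π * I * n * v)
      = (√t : ℂ) * ∑' n : ℤ, cexp (-(π : ℂ) * t * n ^ 2 + 2 * π * (I * v) * n) := by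
        congr 1
        exact tsum_congr fun n => by ring_nf
    _ = ∑' n : ℤ, cexp (-π / t * (n + I * (I * v)) ^ 2) := by
        have hsqrt_ne : (√t : ℂ) ≠ 0 := by exact_mod_cast (Real.sqrt_pos.mpr ht).ne'
        rw [hjacobi, ← mul_assoc, mul_one_div_cancel hsqrt_ne, one_mul]
    _ = ↑(∑' n : ℤ, Real.exp (-π * (n - v) ^ 2 / t)) := by
        rw [Complex.ofReal_tsum]
        refine tsum_congr fun n => ?_
        rw [Complex.ofReal_exp, ← mul_assoc, Complex.I_mul_I]
        push_cast
        ring_nf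

noncomputable def shiftedGaussian (t r : ℝ) (k : ℤ) : ℝ :=
  Real.exp (-π * (k ^ 2 - 2 * k * r) / t)

lemma shiftedGaussian_neg (t r : ℝ) (k : ℤ) :
    shiftedGaussian t r (-k) = shiftedGaussian t (-r) k := by
  simp only [shiftedGaussian]; push_cast; ring_nf

lemma shiftedGaussian_zero (t r : ℝ) : shiftedGaussian t r 0 = 1 := by
  simp [shiftedGaussian]

lemma shiftedGaussian_one_add_neg_one (t r : ℝ) :
    shiftedGaussian t r 1 + shiftedGaussian t r (-1) =
      2 * Real.exp (-π / t) * Real.cosh (2 * π * r / t) := by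
  have h₁ : shiftedGaussian t r 1 = Real.exp (-π / t) * Real.exp (2 * π * r / t) := by
    rw [shiftedGaussian, ← Real.exp_add]; push_cast; ring_nf
  have hneg : shiftedGaussian t r (-1) = Real.exp (-π / t) * Real.exp (-(2 * π * r / t)) := by
    rw [shiftedGaussian, ← Real.exp_add]; push_cast; ring_nf
  rw [h₁, hneg, Real.cosh_eq]
  ring

/-- For `|r| ≤ 1/2` the exponent satisfies `(n + 1)² - 2 (n + 1) r ≥ n (n + 1) ≥ 2 n`. -/
lemma shiftedGaussian_natCast_add_one_le {t r : ℝ} (ht : 0 < t) (hr : |r| ≤ 1 / 2) (n : ℕ) :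
    shiftedGaussian t r (n + 1) ≤ Real.exp (-2 * π / t) ^ n := by
  rw [shiftedGaussian, ← Real.exp_nat_mul, Real.exp_le_exp, mul_div_assoc',
    div_le_div_iff_of_pos_right ht]
  have hn : (0 : ℝ) ≤ n := n.cast_nonneg
  have h2r : 2 * ((n : ℝ) + 1) * r ≤ (n : ℝ) + 1 := by
    nlinarith [le_abs_self r]
  have hn₁ : 0 ≤ (n : ℝ) * (n - 1) := by
    rcases n.eq_zero_or_pos with rfl | hpos
    · simp
    · exact mul_nonneg hn (sub_nonneg.mpr (Nat.one_le_cast.mpr hpos))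
  have key : 2 * (n : ℝ) ≤ ((n : ℝ) + 1) ^ 2 - 2 * ((n : ℝ) + 1) * r := by nlinarith
  push_cast
  nlinarith [mul_le_mul_of_nonneg_left key Real.pi_pos.le]

lemma exp_neg_two_pi_div_lt_one {t : ℝ} (ht : 0 < t) : Real.exp (-2 * π / t) < 1 :=
  Real.exp_lt_one_iff.mpr <| div_neg_of_neg_of_pos (by linarith [Real.pi_pos]) ht

lemma summable_shiftedGaussian_natCast {t r : ℝ} (ht : 0 < t) (hr : |r| ≤ 1 / 2) :
    Summable fun n : ℕ => shiftedGaussian t r n := by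
  have hq : Real.exp (-2 * π / t) < 1 := exp_neg_two_pi_div_lt_one ht
  refine (summable_nat_add_iff 1).mp <| Summable.of_nonneg_of_le (fun _ => (Real.exp_pos _).le)
    (fun n => ?_) (summable_geometric_of_lt_one (Real.exp_pos _).le hq)
  exact_mod_cast shiftedGaussian_natCast_add_one_le ht hr n

lemma tsum_shiftedGaussian_natCast_add_two_le {t r : ℝ} (ht : 0 < t) (hr : |r| ≤ 1 / 2) :
    ∑' n : ℕ, shiftedGaussian t r (n + 2) ≤
      Real.exp (-2 * π / t) / (1 - Real.exp (-2 * π / t)) := by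
  set q := Real.exp (-2 * π / t)
  have hq : q < 1 := exp_neg_two_pi_div_lt_one ht
  have hgeom : HasSum (fun n : ℕ => q ^ (n + 1)) (q / (1 - q)) := by
    have := (hasSum_geometric_of_lt_one (r := q) (Real.exp_pos _).le hq).mul_left q
    simpa only [← pow_succ', ← div_eq_mul_inv] using this
  have htail : Summable fun n : ℕ => shiftedGaussian t r (n + 2) := by
    exact_mod_cast (summable_nat_add_iff 2).mpr (summable_shiftedGaussian_natCast ht hr)
  refine (Summable.tsum_le_tsum (fun n => ?_) htail hgeom.summable).trans_eq hgeom.tsum_eq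
  have := shiftedGaussian_natCast_add_one_le ht hr (n + 1)
  push_cast at this
  rwa [add_assoc, one_add_one_eq_two] at this

lemma summable_shiftedGaussian_neg_natCast_add_one {t r : ℝ} (ht : 0 < t) (hr : |r| ≤ 1 / 2) :
    Summable fun n : ℕ => shiftedGaussian t r (-(n + 1)) := by
  simp only [shiftedGaussian_neg]
  exact_mod_cast (summable_nat_add_iff 1).mpr
    (summable_shiftedGaussian_natCast (r := -r) ht (by rwa [abs_neg]))

lemma tsum_shiftedGaussian_eq {t r : ℝ} (ht : 0 < t) (hr : |r| ≤ 1 / 2) :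
    ∑' k : ℤ, shiftedGaussian t r k =
      1 + 2 * Real.exp (-π / t) * Real.cosh (2 * π * r / t) +
        (∑' n : ℕ, shiftedGaussian t r (n + 2) + ∑' n : ℕ, shiftedGaussian t (-r) (n + 2)) := by
  rw [tsum_of_nat_of_neg_add_one (summable_shiftedGaussian_natCast ht hr)
      (summable_shiftedGaussian_neg_natCast_add_one ht hr),
    (summable_shiftedGaussian_natCast ht hr).tsum_eq_zero_add,
    ((summable_nat_add_iff 1).mpr (summable_shiftedGaussian_natCast ht hr)).tsum_eq_zero_add,
    (summable_shiftedGaussian_neg_natCast_add_one ht hr).tsum_eq_zero_add,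
    ← shiftedGaussian_one_add_neg_one, ← shiftedGaussian_zero t r]
  simp only [shiftedGaussian_neg]
  push_cast
  ring_nf

lemma exp_mul_tsum_exp_neg_sq_eq_tsum_shiftedGaussian (t r : ℝ) (m : ℤ) :
    Real.exp (π * r ^ 2 / t) * ∑' n : ℤ, Real.exp (-π * (n - (m + r)) ^ 2 / t) =
      ∑' k : ℤ, shiftedGaussian t r k := by
  rw [← (Equiv.addRight m).tsum_eq, ← tsum_mul_left]
  refine tsum_congr fun k => ?_
  rw [shiftedGaussian, ← Real.exp_add, Equiv.coe_addRight]
  push_cast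
  ring_nf

lemma exp_neg_two_pi_div_le {a t : ℝ} (ht : 0 < t) (hta : t ≤ 2 * a) :
    Real.exp (-2 * π / t) ≤ Real.exp (-π / a) := by
  have ha : 0 < a := by linarith
  rw [Real.exp_le_exp, div_le_div_iff₀ ht ha]
  nlinarith [Real.pi_pos]

theorem theta3_gaussian_approx_general (a t v : ℝ) (ht : 0 < t) (hta : t < a)
    (m : ℤ) (r : ℝ) (hr₁ : -(1/2) ≤ r) (hr₂ : r < 1/2) (hv : v = m + r) :
    ∃ R : ℂ,
      (Real.sqrt t : ℂ) * Real.exp (π * r ^ 2 / t) *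
          ∑' n : ℤ, Complex.exp (-(π : ℂ) * t * n ^ 2 + 2 * π * Complex.I * n * v)
        = 1 + 2 * Real.exp (-π / t) * Real.cosh (2 * π * r / t) + R ∧
      ‖R‖ ≤ 2 * Real.exp (-2 * π / t) / (1 - Real.exp (-π / a)) := by
  subst hv
  have hr : |r| ≤ 1 / 2 := abs_le.mpr ⟨hr₁, hr₂.le⟩
  have hr' : |-r| ≤ 1 / 2 := by rwa [abs_neg]
  set q := Real.exp (-2 * π / t)
  have hqa : q ≤ Real.exp (-π / a) := exp_neg_two_pi_div_le ht (by linarith)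
  have hexp_lt_one : Real.exp (-π / a) < 1 :=
    Real.exp_lt_one_iff.mpr <| div_neg_of_neg_of_pos (neg_neg_of_pos Real.pi_pos) (ht.trans hta)
  refine ⟨↑(∑' n : ℕ, shiftedGaussian t r (n + 2) + ∑' n : ℕ, shiftedGaussian t (-r) (n + 2)),
    ?_, ?_⟩
  · rw [mul_right_comm, sqrt_mul_tsum_cexp_eq_tsum_exp ht, ← Complex.ofReal_mul,
      mul_comm (∑' n : ℤ, _), exp_mul_tsum_exp_neg_sq_eq_tsum_shiftedGaussian,
      tsum_shiftedGaussian_eq ht hr]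
    push_cast
    ring
  · have hnonneg : ∀ s, 0 ≤ ∑' n : ℕ, shiftedGaussian t s (n + 2) :=
      fun s => tsum_nonneg fun _ => (Real.exp_pos _).le
    rw [Complex.norm_real, Real.norm_of_nonneg (add_nonneg (hnonneg r) (hnonneg (-r)))]
    calc _ ≤ q / (1 - q) + q / (1 - q) :=
          add_le_add (tsum_shiftedGaussian_natCast_add_two_le ht hr)
            (tsum_shiftedGaussian_natCast_add_two_le ht hr')
      _ = 2 * q / (1 - q) := by ring
      _ ≤ 2 * q / (1 - Real.exp (-π / a)) := by gcongr

theorem theta3_gaussian_approx (a t v : ℝ) (ha : 0 < a) (ht : 0 < t) (hta : t < a)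
    (m : ℤ) (r : ℝ) (hr₁ : -(1/2) ≤ r) (hr₂ : r < 1/2) (hv : v = m + r) :
    ∃ R : ℂ,
      (Real.sqrt t : ℂ) * Real.exp (π * r ^ 2 / t) *
          ∑' n : ℤ, Complex.exp (-(π : ℂ) * t * n ^ 2 + 2 * π * Complex.I * n * v)
        = 1 + 2 * Real.exp (-π / t) * Real.cosh (2 * π * r / t) + R ∧
      ‖R‖ ≤ 2 * Real.exp (-2 * π / t) / (1 - Real.exp (-π / a)) :=
  theta3_gaussian_approx_general a t v ht hta m r hr₁ hr₂ hv
end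

section
/- Let a > 0 and 0 < t < a, and let v ∈ ℝ with ((v)) = frac(v) - 1/2. Then √t · e^{π((v))²/t} · θ₄(v | it) = 1 + 2e^{-π/t} cosh(2π((v))/t) + R, where |R| ≤ 2e^{-2π/t}/(1 - e^{-π/a}). -/
open Real Complex

/-!
Poisson summation turns `√t θ₄(v | it)` into the real Gaussian lattice sum
`∑ₖ exp (-π (k - w)² / t)` with `w = ((v))`; the shift `v + 1/2` may be replaced by `((v))`
because the lattice sum is 1-periodic in it. After multiplying by `exp (π w² / t)` the `k`-th term
is `exp (-π (k² - 2 k w) / t)`: `k = 0` gives `1`, `k = ±1` give `2 exp (-π / t) cosh (2 π w / t)`,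
and since `|w| ≤ 1/2` and `t < a`, the terms with `|k| = n + 2` are at most
`exp (-2π / t) exp (-π n / a)`, so the rest is bounded by two geometric series.
-/

lemma tsum_int_eq_add_tail {E : Type*} [AddCommGroup E] [TopologicalSpace E]
    [IsTopologicalAddGroup E] [T2Space E] {f : ℤ → E} (hf : Summable f) :
    ∑' k, f k = f 0 + (f 1 + f (-1)) + ∑' n : ℕ, (f (n + 2) + f (-(n + 2))) := by
  have h := (hasSum_nat_add_iff' 2).mpr hf.hasSum.nat_add_neg
  simp only [Finset.sum_range_succ, Finset.sum_range_zero, Nat.cast_add, Nat.cast_ofNat,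
    Nat.cast_zero, Nat.cast_one, neg_zero] at h
  rw [h.tsum_eq]
  abel

lemma tsum_int_comp_sub_add_int {E : Type*} [AddCommMonoid E] [TopologicalSpace E] (g : ℝ → E)
    (x : ℝ) (m : ℤ) : ∑' n : ℤ, g (n - (x + m)) = ∑' n : ℤ, g (n - x) := by
  rw [← (Equiv.addRight m).tsum_eq]
  simp only [Equiv.coe_addRight, Int.cast_add, add_sub_add_right_eq_sub]

section GeometricTail

variable {f : ℤ → ℝ} {c r : ℝ}

lemma summable_int_of_le_geometric (hf : ∀ k, 0 ≤ f k) (hr0 : 0 ≤ r) (hr1 : r < 1)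
    (hpos : ∀ n : ℕ, f (n + 2) ≤ c * r ^ n) (hneg : ∀ n : ℕ, f (-(n + 2)) ≤ c * r ^ n) :
    Summable f := by
  have hgeom := (summable_geometric_of_lt_one hr0 hr1).mul_left c
  refine summable_int_iff_summable_nat_and_neg.mpr ⟨?_, ?_⟩ <;>
    refine (summable_nat_add_iff 2).mp (hgeom.of_nonneg_of_le (fun n => hf _) fun n => ?_)
  · exact_mod_cast hpos n
  · exact_mod_cast hneg n

lemma tsum_tail_le_geometric (hf : ∀ k, 0 ≤ f k) (hr0 : 0 ≤ r) (hr1 : r < 1)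
    (hpos : ∀ n : ℕ, f (n + 2) ≤ c * r ^ n) (hneg : ∀ n : ℕ, f (-(n + 2)) ≤ c * r ^ n) :
    ∑' n : ℕ, (f (n + 2) + f (-(n + 2))) ≤ 2 * c / (1 - r) := by
  have hgeom := (summable_geometric_of_lt_one hr0 hr1).mul_left (2 * c)
  have hle : ∀ n : ℕ, f (n + 2) + f (-(n + 2)) ≤ 2 * c * r ^ n := fun n => by
    linarith [hpos n, hneg n]
  calc ∑' n : ℕ, (f (n + 2) + f (-(n + 2)))
      ≤ ∑' n : ℕ, 2 * c * r ^ n :=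
        (hgeom.of_nonneg_of_le (fun n => add_nonneg (hf _) (hf _)) hle).tsum_le_tsum hle hgeom
    _ = 2 * c / (1 - r) := by rw [tsum_mul_left, tsum_geometric_of_lt_one hr0 hr1, div_eq_mul_inv]

end GeometricTail

lemma abs_fract_sub_half_le (v : ℝ) : |Int.fract v - 1 / 2| ≤ 1 / 2 := by
  rw [abs_le]
  constructor <;> linarith [Int.fract_nonneg v, Int.fract_lt_one v]

lemma exp_neg_mul_sq_sub_two_mul_le {s s' w k : ℝ} (hw : |w| ≤ 1 / 2) (hs' : 0 ≤ s')
    (hs : s' ≤ s) {n : ℕ} (hk : |k| = n + 2) :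
    rexp (-s * (k ^ 2 - 2 * k * w)) ≤ rexp (-2 * s) * rexp (-s') ^ n := by
  rw [← Real.exp_nat_mul, ← Real.exp_add, Real.exp_le_exp]
  have hkw : 2 * k * w ≤ |k| := by
    calc 2 * k * w ≤ |2 * k * w| := le_abs_self _
      _ = 2 * |k| * |w| := by rw [abs_mul, abs_mul, abs_two]
      _ ≤ |k| := by nlinarith [abs_nonneg k]
  have hn : (0 : ℝ) ≤ n := n.cast_nonneg
  have hquad : 2 + n ≤ k ^ 2 - 2 * k * w := by nlinarith [sq_abs k]
  nlinarith [mul_le_mul_of_nonneg_left hquad (hs'.trans hs), mul_le_mul_of_nonneg_right hs hn]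

-- `(-1)ⁿ = exp (π i n)` puts `θ₄` in the form `∑ exp (-π a n² + 2 π b n)` of Poisson summation.
lemma neg_one_zpow_mul_cexp (t v : ℝ) (n : ℤ) :
    (-1 : ℂ) ^ n * cexp (-(π : ℂ) * t * n ^ 2 + 2 * π * I * n * v) =
      cexp (-π * t * n ^ 2 + 2 * π * (I * (v + 1 / 2)) * n) := by
  rw [← exp_pi_mul_I, ← exp_int_mul, ← Complex.exp_add]
  ring_nf

lemma sqrt_mul_theta4_eq_tsum_gaussian {t : ℝ} (ht : 0 < t) (v : ℝ) :
    (√t : ℂ) * ∑' n : ℤ, (-1 : ℂ) ^ n * cexp (-(π : ℂ) * t * n ^ 2 + 2 * π * I * n * v) =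
      ↑(∑' n : ℤ, rexp (-(π / t) * (n - (v + 1 / 2)) ^ 2)) := by
  have hsqrt : (t : ℂ) ^ (1 / 2 : ℂ) = √t := by
    rw [show (1 / 2 : ℂ) = ((1 / 2 : ℝ) : ℂ) by norm_num, ← ofReal_cpow ht.le, sqrt_eq_rpow]
  have hsqrt0 : (√t : ℂ) ≠ 0 := ofReal_ne_zero.mpr (sqrt_pos.mpr ht).ne'
  simp_rw [neg_one_zpow_mul_cexp]
  rw [tsum_exp_neg_quadratic (by simpa using ht), hsqrt, ← mul_assoc, mul_one_div_cancel hsqrt0,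
    one_mul, ofReal_tsum]
  refine tsum_congr fun n => ?_
  rw [ofReal_exp]
  congr 1
  rw [← mul_assoc, I_mul_I]
  push_cast
  ring

lemma sqrt_mul_exp_mul_theta4_eq {t : ℝ} (ht : 0 < t) (v : ℝ) :
    (√t : ℂ) * rexp (π * (Int.fract v - 1 / 2) ^ 2 / t) *
        ∑' n : ℤ, (-1 : ℂ) ^ n * cexp (-(π : ℂ) * t * n ^ 2 + 2 * π * I * n * v) =
      ↑(∑' k : ℤ, rexp (-(π / t) * (k ^ 2 - 2 * k * (Int.fract v - 1 / 2)))) := by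
  have hshift : v + 1 / 2 = (Int.fract v - 1 / 2) + ((⌊v⌋ + 1 : ℤ) : ℝ) := by
    rw [Int.fract]; push_cast; ring
  rw [mul_right_comm, sqrt_mul_theta4_eq_tsum_gaussian ht, hshift,
    tsum_int_comp_sub_add_int fun x => rexp (-(π / t) * x ^ 2), ← ofReal_mul,
    ← tsum_mul_right]
  congr 1
  refine tsum_congr fun k => ?_
  rw [← Real.exp_add]
  congr 1
  field_simp
  ring

lemma exp_neg_mul_add_exp_neg_mul_eq_cosh (s w : ℝ) :
    rexp (-s * (1 - 2 * w)) + rexp (-s * (1 + 2 * w)) = 2 * rexp (-s) * Real.cosh (2 * s * w) := by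
  calc _ = rexp (-s + 2 * s * w) + rexp (-s + -(2 * s * w)) := by ring_nf
    _ = _ := by rw [Real.exp_add, Real.exp_add, Real.cosh_eq]; ring

theorem theta4_gaussian_approx (a t v : ℝ) (ha : 0 < a) (ht : 0 < t) (hta : t < a) :
    ∃ R : ℂ,
      (Real.sqrt t : ℂ) * Real.exp (π * (Int.fract v - 1/2) ^ 2 / t) *
          ∑' n : ℤ, (-1 : ℂ) ^ n *
            Complex.exp (-(π : ℂ) * t * n ^ 2 + 2 * π * Complex.I * n * v)
        = 1 + 2 * Real.exp (-π / t) * Real.cosh (2 * π * (Int.fract v - 1/2) / t) + R ∧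
      ‖R‖ ≤ 2 * Real.exp (-2 * π / t) / (1 - Real.exp (-π / a)) := by
  set w := Int.fract v - 1 / 2
  set f : ℤ → ℝ := fun k => rexp (-(π / t) * (k ^ 2 - 2 * k * w)) with hf
  have hf0 : ∀ k, 0 ≤ f k := fun k => (exp_pos _).le
  have hr0 : 0 ≤ rexp (-π / a) := (exp_pos _).le
  have hr1 : rexp (-π / a) < 1 :=
    Real.exp_lt_one_iff.mpr (div_neg_of_neg_of_pos (neg_neg_of_pos pi_pos) ha)
  have hbound : ∀ (n : ℕ) (k : ℤ), |(k : ℝ)| = n + 2 →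
      f k ≤ rexp (-2 * π / t) * rexp (-π / a) ^ n := fun n k hk => by
    rw [mul_div_assoc, neg_div]
    exact exp_neg_mul_sq_sub_two_mul_le (abs_fract_sub_half_le v) (div_pos pi_pos ha).le
      (div_le_div_of_nonneg_left pi_pos.le ht hta.le) hk
  have hpos : ∀ n : ℕ, f (n + 2) ≤ rexp (-2 * π / t) * rexp (-π / a) ^ n := fun n =>
    hbound n _ (by push_cast; exact abs_of_pos (by positivity))
  have hneg : ∀ n : ℕ, f (-(n + 2)) ≤ rexp (-2 * π / t) * rexp (-π / a) ^ n := fun n =>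
    hbound n _ (by push_cast; rw [abs_neg]; exact abs_of_pos (by positivity))
  have hone : f 1 + f (-1) = 2 * rexp (-π / t) * Real.cosh (2 * π * w / t) := by
    convert exp_neg_mul_add_exp_neg_mul_eq_cosh (π / t) w using 3 <;> push_cast <;> ring_nf
  have hzero : f 0 = 1 := by simp [hf]
  refine ⟨↑(∑' n : ℕ, (f (n + 2) + f (-(n + 2)))), ?_, ?_⟩
  · rw [sqrt_mul_exp_mul_theta4_eq ht, tsum_int_eq_add_tail
      (summable_int_of_le_geometric hf0 hr0 hr1 hpos hneg), hzero, hone]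
    push_cast
    ring
  · rw [norm_real, norm_of_nonneg (tsum_nonneg fun n => add_nonneg (hf0 _) (hf0 _))]
    exact tsum_tail_le_geometric hf0 hr0 hr1 hpos hneg
end

section
/- Let a > 0 and 0 < t < a, and let v ∈ ℝ with nearest-integer decomposition v = m_v + ⟦v⟧, ⟦v⟧ ∈ [-1/2,1/2). Then (-1)^{m_v} √t · e^{π⟦v⟧²/t} · θ₂(v | it) = 1 - 2e^{-π/t} cosh(2π⟦v⟧/t) + R, where |R| ≤ 2e^{-2π/t}/(1 - e^{-π/a}). -/
/-!
With `τ = it`, the series `θ₂(v | it)` is `e^{πiv - πt/4} θ(v + τ/2, τ)` for Jacobi's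
`θ(z, τ) = ∑ e^{2πinz + πin²τ}`, and writing `v = m + r` only contributes the sign `(-1)^m`.
The modular transformation `θ(z, τ) ↦ θ(z/τ, -1/τ)` turns `√t e^{πr²/t} θ₂(r | it)` into
`∑ (-1)^n e^{π(2nr - n²)/t}`. Its terms `n = 0, ±1` give `1 - 2e^{-π/t} cosh(2πr/t)`. Since
`|r| ≤ 1/2`, the term with `|n| = k + 2` is at most `e^{-2π/t} e^{-kπ/t} ≤ e^{-2π/t} e^{-kπ/a}`,
and the two geometric tails sum to the error bound.
-/

open Real Complex

lemma cexp_mul_cexp_eq_jacobiTheta₂_term (t : ℝ) (z : ℂ) (n : ℤ) :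
    cexp (-π * t * (n + 1 / 2) ^ 2) * cexp ((2 * n + 1) * π * I * z) =
      cexp (π * I * z - π * t / 4) * jacobiTheta₂_term n (z + I * t / 2) (I * t) := by
  rw [jacobiTheta₂_term, ← Complex.exp_add, ← Complex.exp_add]
  congr 1
  linear_combination (-π * t * n ^ 2 - π * t * n) * I_sq

lemma tsum_cexp_mul_cexp_eq_jacobiTheta₂ (t : ℝ) (z : ℂ) :
    ∑' n : ℤ, cexp (-π * t * (n + 1 / 2) ^ 2) * cexp ((2 * n + 1) * π * I * z) =
      cexp (π * I * z - π * t / 4) * jacobiTheta₂ (z + I * t / 2) (I * t) := by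
  simp_rw [cexp_mul_cexp_eq_jacobiTheta₂_term, tsum_mul_left, jacobiTheta₂]

lemma sqrt_mul_cexp_mul_tsum_eq_jacobiTheta₂ {t : ℝ} (ht : 0 < t) (z : ℂ) :
    (√t : ℂ) * cexp (π * z ^ 2 / t) *
        ∑' n : ℤ, cexp (-π * t * (n + 1 / 2) ^ 2) * cexp ((2 * n + 1) * π * I * z) =
      jacobiTheta₂ (1 / 2 - I * z / t) (I / t) := by
  have ht₀ : (t : ℂ) ≠ 0 := by exact_mod_cast ht.ne'
  have hsqrt : (√t : ℂ) ≠ 0 := by exact_mod_cast (Real.sqrt_pos.mpr ht).ne'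
  have hroot : (-I * (I * t)) ^ (1 / 2 : ℂ) = (√t : ℂ) := by
    rw [show -I * (I * t) = ((t : ℝ) : ℂ) by linear_combination (-(t : ℂ)) * I_sq,
      show (1 / 2 : ℂ) = ((1 / 2 : ℝ) : ℂ) by norm_num, ← ofReal_cpow ht.le,
      Real.sqrt_eq_rpow]
  have hz : (z + I * t / 2) / (I * t) = 1 / 2 - I * z / t := by
    field_simp
    linear_combination (2 * z) * I_sq
  have hτ : -1 / (I * t) = I / t := by
    field_simp
    linear_combination (-1) * I_sq
  rw [tsum_cexp_mul_cexp_eq_jacobiTheta₂, jacobiTheta₂_functional_equation, hroot, hz, hτ]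
  have hexp : cexp (π * z ^ 2 / t) * cexp (π * I * z - π * t / 4) *
      cexp (-π * I * (z + I * t / 2) ^ 2 / (I * t)) = 1 := by
    rw [← Complex.exp_add, ← Complex.exp_add, ← Complex.exp_zero]
    congr 1
    field_simp
    linear_combination (-4 * π * t ^ 2) * I_sq
  calc _ = (√t * (1 / √t) : ℂ) * (cexp (π * z ^ 2 / t) * cexp (π * I * z - π * t / 4) *
          cexp (-π * I * (z + I * t / 2) ^ 2 / (I * t))) *
          jacobiTheta₂ (1 / 2 - I * z / t) (I / t) := by ring
    _ = _ := by rw [mul_one_div_cancel hsqrt, hexp, one_mul, one_mul]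

lemma tsum_cexp_mul_cexp_int_add (t : ℝ) (m : ℤ) (z : ℂ) :
    ∑' n : ℤ, cexp (-π * t * (n + 1 / 2) ^ 2) * cexp ((2 * n + 1) * π * I * (m + z)) =
      (-1) ^ m *
        ∑' n : ℤ, cexp (-π * t * (n + 1 / 2) ^ 2) * cexp ((2 * n + 1) * π * I * z) := by
  rw [← tsum_mul_left]
  congr 1 with n
  have hsplit : (2 * n + 1) * π * I * (m + z) =
      ((2 * n + 1) * m : ℤ) * (π * I) + (2 * n + 1) * π * I * z := by
    push_cast
    ring
  rw [hsplit, Complex.exp_add, Complex.exp_int_mul, Complex.exp_pi_mul_I, zpow_mul,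
    (odd_two_mul_add_one n).neg_one_zpow]
  ring

lemma jacobiTheta₂_term_half_sub_I_mul_div (n : ℤ) (r t : ℝ) :
    jacobiTheta₂_term n (1 / 2 - I * r / t) (I / t) =
      (-1) ^ n * rexp (π * (2 * n * r - n ^ 2) / t) := by
  rw [jacobiTheta₂_term, ofReal_exp, ← Complex.exp_pi_mul_I, ← Complex.exp_int_mul,
    ← Complex.exp_add]
  congr 1
  push_cast
  linear_combination (π * n ^ 2 / t - 2 * π * n * r / t) * I_sq

lemma norm_jacobiTheta₂_term_half_sub_I_mul_div_le {a t r : ℝ} (ht : 0 < t) (hta : t ≤ a)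
    (hr : |r| ≤ 1 / 2) {k : ℤ} {n : ℕ} (hk : |k| = n + 2) :
    ‖jacobiTheta₂_term k (1 / 2 - I * r / t) (I / t)‖ ≤
      rexp (-2 * π / t) * rexp (-π / a) ^ n := by
  rw [jacobiTheta₂_term_half_sub_I_mul_div, norm_mul, norm_zpow, norm_neg, norm_one, one_zpow,
    one_mul, norm_real, Real.norm_of_nonneg (Real.exp_pos _).le, ← Real.exp_nat_mul,
    ← Real.exp_add, Real.exp_le_exp]
  have hk' : |(k : ℝ)| = n + 2 := by exact_mod_cast hk
  have hquad : 2 * k * r - k ^ 2 ≤ -2 - n := by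
    have : 2 * k * r ≤ |(k : ℝ)| := by
      nlinarith [le_abs_self (k * r), abs_mul (k : ℝ) r, abs_nonneg (k : ℝ)]
    nlinarith [sq_abs (k : ℝ)]
  calc π * (2 * k * r - k ^ 2) / t ≤ π * (-2 - n) / t := by gcongr
    _ = -2 * π / t - n * (π / t) := by ring
    _ ≤ -2 * π / t - n * (π / a) := by gcongr
    _ = -2 * π / t + n * (-π / a) := by ring

lemma jacobiTheta₂_term_half_sub_I_mul_div_center (r t : ℝ) :
    jacobiTheta₂_term 0 (1 / 2 - I * r / t) (I / t) +
        jacobiTheta₂_term 1 (1 / 2 - I * r / t) (I / t) +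
        jacobiTheta₂_term (-1) (1 / 2 - I * r / t) (I / t) =
      1 - 2 * (rexp (-π / t) : ℂ) * (Real.cosh (2 * π * r / t) : ℂ) := by
  have hplus : cexp (π * (2 * r - 1) / t) = cexp (-π / t) * cexp (2 * π * r / t) := by
    rw [← Complex.exp_add]; ring_nf
  have hminus : cexp (π * (-(2 * r) - 1) / t) = cexp (-π / t) * cexp (-(2 * π * r / t)) := by
    rw [← Complex.exp_add]; ring_nf
  simp only [jacobiTheta₂_term_half_sub_I_mul_div]
  norm_num
  rw [hplus, hminus, Complex.cosh]
  ring

lemma HasSum.norm_sub_center_le_geometric {E : Type*} [NormedAddCommGroup E] {f : ℤ → E} {a : E}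
    (hf : HasSum f a) {q c : ℝ} (hc₀ : 0 ≤ c) (hc₁ : c < 1)
    (hpos : ∀ n : ℕ, ‖f (n + 2)‖ ≤ q * c ^ n)
    (hneg : ∀ n : ℕ, ‖f (-(n + 2))‖ ≤ q * c ^ n) :
    ‖a - (f 0 + f 1 + f (-1))‖ ≤ 2 * q / (1 - c) := by
  have htail := (hasSum_nat_add_iff' 2).mpr hf.nat_add_neg
  have hgeom := (hasSum_geometric_of_lt_one hc₀ hc₁).mul_left (2 * q)
  have hbound : ∀ n : ℕ,
      ‖f ((n + 2 : ℕ) : ℤ) + f (-((n + 2 : ℕ) : ℤ))‖ ≤ 2 * q * c ^ n := by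
    intro n
    push_cast
    linarith [norm_add_le (f (n + 2)) (f (-(n + 2))), hpos n, hneg n]
  have hcenter : a + f 0 - ∑ i ∈ Finset.range 2, (f i + f (-i)) = a - (f 0 + f 1 + f (-1)) := by
    simp only [Finset.sum_range_succ, Finset.sum_range_zero, Nat.cast_zero, Nat.cast_one, neg_zero]
    abel
  rw [div_eq_mul_inv, ← hcenter]
  exact htail.norm_le_of_bounded hgeom hbound

theorem theta2_gaussian_approx_general (a t v : ℝ) (ht : 0 < t) (hta : t < a)
    (m : ℤ) (r : ℝ) (hr₁ : -(1/2) ≤ r) (hr₂ : r < 1/2) (hv : v = m + r) :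
    ∃ R : ℂ,
      ((-1 : ℂ) ^ m) * (Real.sqrt t : ℂ) * Real.exp (π * r ^ 2 / t) *
          ∑' n : ℤ, Complex.exp (-(π : ℂ) * t * (n + 1/2) ^ 2) *
            Complex.exp ((2 * n + 1) * π * Complex.I * v)
        = 1 - 2 * Real.exp (-π / t) * Real.cosh (2 * π * r / t) + R ∧
      ‖R‖ ≤ 2 * Real.exp (-2 * π / t) / (1 - Real.exp (-π / a)) := by
  set T : ℤ → ℂ := fun n ↦ jacobiTheta₂_term n (1 / 2 - I * r / t) (I / t)
  have hT : HasSum T (jacobiTheta₂ (1 / 2 - I * r / t) (I / t)) :=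
    hasSum_jacobiTheta₂_term _ (by simpa using ht)
  refine ⟨jacobiTheta₂ (1 / 2 - I * r / t) (I / t) - (T 0 + T 1 + T (-1)), ?_, ?_⟩
  · have hsign : ((-1 : ℂ) ^ m) * (-1) ^ m = 1 := by
      rw [← mul_zpow, neg_one_mul, neg_neg, one_zpow]
    rw [← jacobiTheta₂_term_half_sub_I_mul_div_center, hv,
      ← sqrt_mul_cexp_mul_tsum_eq_jacobiTheta₂ ht]
    push_cast
    rw [tsum_cexp_mul_cexp_int_add]
    linear_combination (√t * cexp (π * r ^ 2 / t) *
      ∑' n : ℤ, cexp (-π * t * (n + 1 / 2) ^ 2) * cexp ((2 * n + 1) * π * I * r)) * hsign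
  · have hr : |r| ≤ 1 / 2 := abs_le.mpr ⟨hr₁, hr₂.le⟩
    have hk : ∀ n : ℕ, |(n : ℤ) + 2| = n + 2 := fun n ↦ abs_of_nonneg (by positivity)
    have hc : rexp (-π / a) < 1 :=
      Real.exp_lt_one_iff.mpr (div_neg_of_neg_of_pos (neg_neg_of_pos pi_pos) (ht.trans hta))
    simpa using hT.norm_sub_center_le_geometric (Real.exp_pos _).le hc
      (fun n ↦ norm_jacobiTheta₂_term_half_sub_I_mul_div_le ht hta.le hr (hk n))
      (fun n ↦ norm_jacobiTheta₂_term_half_sub_I_mul_div_le ht hta.le hr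
        ((abs_neg _).trans (hk n)))

theorem theta2_gaussian_approx (a t v : ℝ) (ha : 0 < a) (ht : 0 < t) (hta : t < a)
    (m : ℤ) (r : ℝ) (hr₁ : -(1/2) ≤ r) (hr₂ : r < 1/2) (hv : v = m + r) :
    ∃ R : ℂ,
      ((-1 : ℂ) ^ m) * (Real.sqrt t : ℂ) * Real.exp (π * r ^ 2 / t) *
          ∑' n : ℤ, Complex.exp (-(π : ℂ) * t * (n + 1/2) ^ 2) *
            Complex.exp ((2 * n + 1) * π * Complex.I * v)
        = 1 - 2 * Real.exp (-π / t) * Real.cosh (2 * π * r / t) + R ∧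
      ‖R‖ ≤ 2 * Real.exp (-2 * π / t) / (1 - Real.exp (-π / a)) :=
  theta2_gaussian_approx_general a t v ht hta m r hr₁ hr₂ hv
end

section
/- Let C > 0, and let x ∈ ℝ with |x| ≤ C. Let 0 < ε < min(1, 2C) and 0 < t < ε²/(4π²C²). Then √t · θ₃(√t·x | it) = e^{-πx²}(1 + R) with |R| ≤ ((4 - 2e^{-π})/(1 - e^{-π})) · e^{-(π-ε)/t}. -/
/-!
Jacobi's functional equation turns `√t · θ(√t x | i t)` into `e^{-π x²} · θ(-i x/√t | i/t)`.
In the dual series the `n`-th term has modulus `exp((-π n² + 2π n x √t)/t) ≤ r^|n|` with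
`r = e^{-(π-ε)/t}`, because `2π |x| √t ≤ ε` and `n² ≥ |n|`. Hence `R = θ(-i x/√t | i/t) - 1`
is bounded by two geometric tails, `2r/(1-r)`, and `r ≤ e^{-π}` because `π t < 1 < π - ε`.
-/

open Real Complex

lemma tsum_exp_eq_jacobiTheta₂ (z t : ℂ) :
    ∑' n : ℤ, cexp (-(π : ℂ) * t * n ^ 2 + 2 * π * I * n * z) = jacobiTheta₂ z (t * I) :=
  tsum_congr fun n ↦ congr_arg cexp <| by linear_combination (-(π : ℂ) * t * n ^ 2) * I_sq

lemma sqrt_mul_jacobiTheta₂_mul_I {t : ℝ} (ht : 0 < t) (x : ℂ) :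
    (√t : ℂ) * jacobiTheta₂ (√t * x) (t * I)
      = cexp (-π * x ^ 2) * jacobiTheta₂ (-(x / √t) * I) ((t⁻¹ : ℝ) * I) := by
  have hs : (√t : ℂ) ≠ 0 := by exact_mod_cast (Real.sqrt_pos.mpr ht).ne'
  have ht₀ : (t : ℂ) ≠ 0 := by exact_mod_cast ht.ne'
  have hsq : (√t : ℂ) ^ 2 = t := by exact_mod_cast Real.sq_sqrt ht.le
  have htI : (t : ℂ) * I ≠ 0 := mul_ne_zero ht₀ I_ne_zero
  have hroot : (-I * (t * I)) ^ (1 / 2 : ℂ) = √t := by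
    rw [show -I * (t * I) = (t : ℂ) by linear_combination (-(t : ℂ)) * I_sq,
      show (1 / 2 : ℂ) = ((1 / 2 : ℝ) : ℂ) by norm_num, ← ofReal_cpow ht.le, ← Real.sqrt_eq_rpow]
  have hexp : -π * I * (√t * x) ^ 2 / (t * I) = -π * x ^ 2 := by
    rw [div_eq_iff htI]
    linear_combination -π * I * x ^ 2 * hsq
  have hz : √t * x / (t * I) = -(x / √t) * I := by
    field_simp
    linear_combination x * hsq + x * t * I_sq
  have hτ : -1 / (t * I) = (t⁻¹ : ℝ) * I := by
    push_cast
    field_simp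
    linear_combination -I_sq
  rw [jacobiTheta₂_functional_equation, hroot, hexp, hz, hτ]
  field_simp

lemma norm_jacobiTheta₂_term_le_pow {z τ : ℂ} {ε : ℝ} (hτ : 0 ≤ τ.im)
    (hz : 2 * π * |z.im| ≤ ε * τ.im) {n : ℤ} (hn : n ≠ 0) :
    ‖jacobiTheta₂_term n z τ‖ ≤ rexp (-(π - ε) * τ.im) ^ n.natAbs := by
  rw [norm_jacobiTheta₂_term, ← Real.exp_nat_mul, Real.exp_le_exp, Nat.cast_natAbs,
    Int.cast_abs]
  have h1 : 1 ≤ |(n : ℝ)| := by exact_mod_cast Int.one_le_abs hn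
  have hsq : (n : ℝ) ^ 2 = |(n : ℝ)| ^ 2 := (sq_abs _).symm
  have hcross : -(2 * π * n * z.im) ≤ |(n : ℝ)| * (ε * τ.im) := by
    calc -(2 * π * n * z.im) ≤ |(n : ℝ)| * (2 * π * |z.im|) := (neg_le_abs _).trans_eq <| by
          rw [abs_mul, abs_mul, abs_of_pos two_pi_pos]; ring
      _ ≤ _ := by gcongr
  rw [hsq]
  nlinarith [mul_nonneg (mul_nonneg pi_pos.le hτ)
    (mul_nonneg (abs_nonneg (n : ℝ)) (sub_nonneg.2 h1))]

lemma norm_jacobiTheta₂_sub_one_le_of_term_le {z τ : ℂ} (hτ : 0 < τ.im) {r : ℝ} (hr : r < 1)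
    (h : ∀ n : ℤ, n ≠ 0 → ‖jacobiTheta₂_term n z τ‖ ≤ r ^ n.natAbs) :
    ‖jacobiTheta₂ z τ - 1‖ ≤ 2 / (1 - r) * r := by
  have hr₀ : 0 ≤ r := (norm_nonneg _).trans ((h 1 one_ne_zero).trans_eq (pow_one r))
  have hpairs : HasSum (fun n : ℕ ↦ jacobiTheta₂_term (n + 1 : ℕ) z τ
      + jacobiTheta₂_term (-(n + 1 : ℕ)) z τ) (jacobiTheta₂ z τ - 1) := by
    have h₀ : jacobiTheta₂_term 0 z τ = 1 := by simp [jacobiTheta₂_term]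
    have := (hasSum_jacobiTheta₂_term z hτ).nat_add_neg
    rw [← hasSum_nat_add_iff' 1, Finset.sum_range_one, Nat.cast_zero, neg_zero, h₀] at this
    exact (show jacobiTheta₂ z τ + 1 - (1 + 1) = jacobiTheta₂ z τ - 1 by ring) ▸ this
  have hgeom : HasSum (fun n : ℕ ↦ 2 * r * r ^ n) (2 * r * (1 - r)⁻¹) :=
    (hasSum_geometric_of_lt_one hr₀ hr).mul_left (2 * r)
  rw [show 2 / (1 - r) * r = 2 * r * (1 - r)⁻¹ by ring]
  refine hpairs.norm_le_of_bounded hgeom fun n ↦ ?_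
  calc _ ≤ ‖jacobiTheta₂_term (n + 1 : ℕ) z τ‖ + ‖jacobiTheta₂_term (-(n + 1 : ℕ)) z τ‖ :=
        norm_add_le _ _
    _ ≤ r ^ (n + 1) + r ^ (n + 1) := by
        gcongr
        · exact h _ (by omega)
        · exact h _ (by omega)
    _ = 2 * r * r ^ n := by ring

lemma two_pi_mul_abs_div_sqrt_le {x C ε t : ℝ} (hx : |x| ≤ C) (ht : 0 < t)
    (h : 2 * π * C * √t ≤ ε) : 2 * π * |x / √t| ≤ ε * t⁻¹ := by
  have hs : 0 < √t := Real.sqrt_pos.mpr ht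
  rw [abs_div, abs_of_pos hs, ← div_eq_mul_inv, le_div_iff₀ ht]
  calc 2 * π * (|x| / √t) * t = 2 * π * |x| * √t := by
        field_simp
        rw [Real.sq_sqrt ht.le]
    _ ≤ 2 * π * C * √t := by gcongr
    _ ≤ ε := h

theorem theta3_normal_limit (C x ε t : ℝ) (hC : 0 < C) (hx : |x| ≤ C)
    (hε₁ : 0 < ε) (hε₂ : ε < min 1 (2 * C))
    (ht : 0 < t) (ht' : t < ε ^ 2 / (4 * π ^ 2 * C ^ 2)) :
    ∃ R : ℂ,
      (Real.sqrt t : ℂ) *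
          ∑' n : ℤ, Complex.exp (-(π : ℂ) * t * n ^ 2 +
            2 * π * Complex.I * n * (Real.sqrt t * x))
        = Real.exp (-π * x ^ 2) * (1 + R) ∧
      ‖R‖ ≤ (4 - 2 * Real.exp (-π)) / (1 - Real.exp (-π)) *
        Real.exp (-(π - ε) / t) := by
  obtain ⟨hε1, hε2C⟩ := lt_min_iff.mp hε₂
  have hsε : 2 * π * C * √t < ε := by
    rw [mul_comm, ← lt_div_iff₀ (by positivity), Real.sqrt_lt' (by positivity)]
    convert ht' using 1
    ring
  set r := rexp (-(π - ε) / t)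
  have hrE : r ≤ rexp (-π) := by
    have htπ : t * π ^ 2 < 1 := by
      have : t * (4 * π ^ 2 * C ^ 2) < 4 * C ^ 2 :=
        ((lt_div_iff₀ (by positivity)).mp ht').trans (by nlinarith)
      nlinarith
    rw [Real.exp_le_exp, neg_div, neg_le_neg_iff, le_div_iff₀ ht]
    nlinarith [pi_gt_three]
  have hE : rexp (-π) < 1 := Real.exp_lt_one_iff.mpr (by linarith [pi_pos])
  refine ⟨jacobiTheta₂ (-(x / √t) * I) ((t⁻¹ : ℝ) * I) - 1, ?_, ?_⟩
  · rw [tsum_exp_eq_jacobiTheta₂, sqrt_mul_jacobiTheta₂_mul_I ht, add_sub_cancel, ofReal_exp]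
    push_cast
    ring
  calc _ ≤ 2 / (1 - r) * r := by
        refine norm_jacobiTheta₂_sub_one_le_of_term_le (by simpa using ht) (hrE.trans_lt hE)
          fun n hn ↦ (norm_jacobiTheta₂_term_le_pow (ε := ε) (by simp [ht.le]) ?_ hn).trans_eq ?_
        · simpa only [mul_I_im, neg_re, div_ofReal_re, ofReal_re, abs_neg] using
            two_pi_mul_abs_div_sqrt_le hx ht hsε.le
        · rw [mul_I_im, ofReal_re, ← div_eq_mul_inv]
    _ ≤ (4 - 2 * rexp (-π)) / (1 - rexp (-π)) * r := by
        gcongr <;> linarith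
end

section
/- Let C > 0, and let x ∈ ℝ with |x| ≤ C. Let 0 < ε < min(1, 2C) and 0 < t < ε²/(4π²C²). Then √t · θ₂(√t·x | it) = e^{-πx²}(1 + R) with |R| ≤ ((4 - 2e^{-π})/(1 - e^{-π})) · e^{-(π-ε)/t}. -/
open Real Complex

/-!
Poisson summation (`Complex.tsum_exp_neg_quadratic`) turns the theta series into the alternating
Gaussian sum `t^{-1/2} ∑ₖ (-1)^k e^{-π(v+k)²/t}`. With `v = √t·x` the term `k = 0` is exactly
`e^{-πx²}`, and since `2π|v| ≤ ε` every other term is at most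
`e^{-πx²} · e^{-(π-ε)/t} · e^{-π(|k|-1)}`; summing the two geometric tails bounds `R`.
-/

theorem hasSum_ite_eq_zero_pow_natAbs_sub_one {r : ℝ} (hr0 : 0 ≤ r) (hr1 : r < 1) :
    HasSum (fun k : ℤ => if k = 0 then 0 else r ^ (k.natAbs - 1)) (2 / (1 - r)) := by
  have hgeom := hasSum_geometric_of_lt_one hr0 hr1
  rw [div_eq_mul_inv, two_mul]
  refine HasSum.of_nat_of_neg_add_one ?_ (hgeom.congr_fun fun n => ?_)
  · refine (hasSum_nat_add_iff' 1).mp ?_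
    simp only [Finset.range_one, Finset.sum_singleton, Nat.cast_zero, if_pos, sub_zero]
    refine hgeom.congr_fun fun n => ?_
    rw [if_neg (by omega)]
    congr 1
  · rw [if_neg (by omega)]
    congr 1

theorem norm_tsum_sub_apply_zero_le_of_geometric {E : Type*} [NormedAddCommGroup E]
    [CompleteSpace E] {F : ℤ → E} {A r : ℝ} (hr0 : 0 ≤ r) (hr1 : r < 1)
    (hF : ∀ k ≠ 0, ‖F k‖ ≤ A * r ^ (k.natAbs - 1)) :
    ‖∑' k, F k - F 0‖ ≤ A * (2 / (1 - r)) := by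
  set G : ℤ → E := fun k => if k = 0 then 0 else F k
  have hbound := (hasSum_ite_eq_zero_pow_natAbs_sub_one hr0 hr1).mul_left A
  have hG (k : ℤ) : ‖G k‖ ≤ A * if k = 0 then 0 else r ^ (k.natAbs - 1) := by
    by_cases hk : k = 0 <;> simp [G, hk, hF]
  have hFG : Function.update G 0 (F 0) = F := by
    ext k
    by_cases hk : k = 0 <;> simp [G, hk]
  have hsum := (Summable.of_norm_bounded hbound.summable hG).hasSum.update 0 (F 0)
  rw [hFG] at hsum
  rw [hsum.tsum_eq]
  simpa [G] using tsum_of_norm_bounded hbound hG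

theorem sqrt_mul_theta2_eq_tsum_alternating_gaussian {t : ℝ} (ht : 0 < t) (v : ℂ) :
    (√t : ℂ) * ∑' n : ℤ, cexp (-π * t * (n + 1 / 2) ^ 2) * cexp ((2 * n + 1) * π * I * v)
      = ∑' k : ℤ, (-1) ^ k * cexp (-π * (v + k) ^ 2 / t) := by
  have htc : (t : ℂ) ≠ 0 := mod_cast ht.ne'
  have ha : 0 < ((t : ℂ)⁻¹).re := by
    rw [← ofReal_inv, ofReal_re]
    positivity
  have hroot : 1 / (t : ℂ)⁻¹ ^ (1 / 2 : ℂ) = √t := by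
    rw [← ofReal_inv, show (1 / 2 : ℂ) = ((1 / 2 : ℝ) : ℂ) by norm_num,
      ← ofReal_cpow (inv_nonneg.mpr ht.le), Real.inv_rpow ht.le, ← Real.sqrt_eq_rpow]
    push_cast
    rw [one_div, inv_inv]
  have hpoisson := Complex.tsum_exp_neg_quadratic ha (-v / t - I / 2)
  rw [hroot] at hpoisson
  -- Both sides are `e^{-πv²/t}` times the corresponding side of `hpoisson`.
  have htheta (n : ℤ) : cexp (-π * t * (n + 1 / 2) ^ 2) * cexp ((2 * n + 1) * π * I * v) =
      cexp (-π * v ^ 2 / t) * cexp (-π / (t : ℂ)⁻¹ * (n + I * (-v / t - I / 2)) ^ 2) := by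
    rw [← Complex.exp_add, ← Complex.exp_add]
    congr 1
    field_simp
    linear_combination (4 * t * I * v - 4 * t ^ 2 * n + t ^ 2 * (I ^ 2 - 1) + 4 * v ^ 2) * I_sq
  have hdual (k : ℤ) : (-1) ^ k * cexp (-π * (v + k) ^ 2 / t) =
      cexp (-π * v ^ 2 / t) * cexp (-π * (t : ℂ)⁻¹ * k ^ 2 + 2 * π * (-v / t - I / 2) * k) := by
    rw [← exp_neg_pi_mul_I, ← exp_int_mul, ← Complex.exp_add, ← Complex.exp_add]
    congr 1
    field_simp
    ring
  simp_rw [htheta, hdual, tsum_mul_left, hpoisson]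
  ring

theorem exp_neg_pi_mul_int_mul_add_le {t ε v : ℝ} (ht0 : 0 < t) (ht1 : t ≤ 1) (hε : ε ≤ π)
    (hv : 2 * π * |v| ≤ ε) {k : ℤ} (hk : k ≠ 0) :
    Real.exp (-π * k * (k + 2 * v) / t) ≤
      Real.exp (-(π - ε) / t) * Real.exp (-π) ^ (k.natAbs - 1) := by
  have hm : (1 : ℝ) ≤ |(k : ℝ)| := mod_cast Int.one_le_abs hk
  have hpow : ((k.natAbs - 1 : ℕ) : ℝ) = |(k : ℝ)| - 1 := by
    rw [Nat.cast_sub (Int.natAbs_pos.mpr hk), Nat.cast_natAbs, Int.cast_abs, Nat.cast_one]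
  rw [← Real.exp_nat_mul, ← Real.exp_add, Real.exp_le_exp, hpow, div_add' _ _ _ ht0.ne',
    div_le_div_iff_of_pos_right ht0]
  have hkv : -(2 * π * k * v) ≤ ε * |(k : ℝ)| := by
    calc -(2 * π * k * v) ≤ |2 * π * k * v| := neg_le_abs _
      _ = 2 * π * |v| * |(k : ℝ)| := by rw [abs_mul, abs_mul, abs_of_pos two_pi_pos]; ring
      _ ≤ ε * |(k : ℝ)| := by gcongr
  have hexpand : -π * k * (k + 2 * v) = -π * |(k : ℝ)| ^ 2 - 2 * π * k * v := by
    rw [sq_abs]; ring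
  rw [hexpand]
  -- the gap is `(|k| - 1) * (π * (|k| + 1) - ε - π * t)`, and `π * (|k| + 1) ≥ 2 * π ≥ ε + π * t`
  linarith [mul_nonneg (sub_nonneg.mpr hm)
    (by nlinarith [pi_pos] : (0 : ℝ) ≤ π * (|(k : ℝ)| + 1) - ε - π * t)]

theorem two_pi_mul_mul_sqrt_lt {C ε t : ℝ} (hC : 0 < C) (hε : 0 < ε) (ht : 0 ≤ t)
    (ht' : t < ε ^ 2 / (4 * π ^ 2 * C ^ 2)) : 2 * π * C * √t < ε := by
  refine lt_of_pow_lt_pow_left₀ 2 hε.le ?_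
  rw [mul_pow, Real.sq_sqrt ht]
  linarith [(lt_div_iff₀ (by positivity)).mp ht']

theorem neg_one_zpow_mul_cexp_sqrt_mul {t : ℝ} (ht : 0 < t) (x : ℝ) (k : ℤ) :
    (-1) ^ k * cexp (-π * ((√t * x : ℝ) + k) ^ 2 / t) =
      Real.exp (-π * x ^ 2) * ((-1) ^ k * (Real.exp (-π * k * (k + 2 * (√t * x)) / t) : ℂ)) := by
  have hsq : ((√t : ℝ) : ℂ) ^ 2 = t := by rw [← ofReal_pow, Real.sq_sqrt ht.le]
  have hsqrt0 : ((√t : ℝ) : ℂ) ≠ 0 := mod_cast (Real.sqrt_pos.mpr ht).ne'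
  push_cast
  rw [mul_left_comm, ← Complex.exp_add, ← hsq]
  congr 2
  field_simp
  ring

theorem theta2_normal_limit (C x ε t : ℝ) (hC : 0 < C) (hx : |x| ≤ C)
    (hε₁ : 0 < ε) (hε₂ : ε < min 1 (2 * C))
    (ht : 0 < t) (ht' : t < ε ^ 2 / (4 * π ^ 2 * C ^ 2)) :
    ∃ R : ℂ,
      (Real.sqrt t : ℂ) *
          ∑' n : ℤ, Complex.exp (-(π : ℂ) * t * (n + 1/2) ^ 2) *
            Complex.exp ((2 * n + 1) * π * Complex.I * (Real.sqrt t * x))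
        = Real.exp (-π * x ^ 2) * (1 + R) ∧
      ‖R‖ ≤ (4 - 2 * Real.exp (-π)) / (1 - Real.exp (-π)) *
        Real.exp (-(π - ε) / t) := by
  have hsqrt := two_pi_mul_mul_sqrt_lt hC hε₁ ht.le ht'
  have ht1 : t ≤ 1 := by
    have hπ : 2 * C * (π * √t) < 2 * C * 1 := by linarith [hε₂.trans_le (min_le_right _ _)]
    have := lt_of_mul_lt_mul_left hπ (by positivity)
    rw [← Real.sqrt_le_one]
    nlinarith [pi_gt_three, Real.sqrt_nonneg t]
  have hv : 2 * π * |√t * x| ≤ ε := by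
    rw [abs_mul, abs_of_nonneg (Real.sqrt_nonneg t)]
    nlinarith [mul_le_mul_of_nonneg_left hx (by positivity : (0 : ℝ) ≤ 2 * π * √t)]
  set F : ℤ → ℂ := fun k => (-1) ^ k * (Real.exp (-π * k * (k + 2 * (√t * x)) / t) : ℂ)
  rw [← ofReal_mul, sqrt_mul_theta2_eq_tsum_alternating_gaussian ht,
    tsum_congr (neg_one_zpow_mul_cexp_sqrt_mul ht x), tsum_mul_left]
  refine ⟨∑' k, F k - 1, by ring, ?_⟩
  have hr1 : Real.exp (-π) < 1 := Real.exp_lt_one_iff.mpr (neg_neg_of_pos pi_pos)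
  have hterm (k : ℤ) (hk : k ≠ 0) :
      ‖F k‖ ≤ Real.exp (-(π - ε) / t) * Real.exp (-π) ^ (k.natAbs - 1) := by
    simp only [F, norm_mul, norm_zpow, norm_neg, norm_one, one_zpow, one_mul, Complex.norm_real,
      Real.norm_of_nonneg (Real.exp_pos _).le]
    exact exp_neg_pi_mul_int_mul_add_le ht ht1
      (by linarith [pi_gt_three, hε₂.trans_le (min_le_left _ _)]) hv hk
  calc ‖∑' k, F k - 1‖ ≤ Real.exp (-(π - ε) / t) * (2 / (1 - Real.exp (-π))) := by
        simpa [F] using norm_tsum_sub_apply_zero_le_of_geometric (Real.exp_pos _).le hr1 hterm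
    _ ≤ _ := by
        rw [mul_comm]
        gcongr
        linarith
end

section
/- Let C > 0, and let x ∈ ℝ with |x| ≤ C. Let 0 < ε < min(1, 2C) and 0 < t < ε²/(4π²C²). Then √t · θ₁(1/2 + √t·x | it) = e^{-πx²}(1 + R) with |R| ≤ ((4 - 2e^{-π})/(1 - e^{-π})) · e^{-(π-ε)/t}. -/
open Real Complex

/-!
Writing θ₁(1/2 + w | it) through `jacobiTheta₂` and applying the modular transformation τ ↦ -1/τ
turns √t · θ₁(1/2 + √t x | it) into e^{-πx²} · θ(1/2 - i x/√t | i/t). The latter series is 1 plus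
terms of modulus exp((2πku - πk²)/t) with u = √t x; when 2π|u| ≤ ε and t ≤ 1 the k-th of them is at
most e^{-(π-ε)/t} e^{-π(|k|-1)}, and the geometric series over k ≠ 0 sums to
2/(1 - e^{-π}) · e^{-(π-ε)/t}.
-/

lemma norm_jacobiTheta₂_term_le_of_natAbs_eq {z τ : ℂ} {ε : ℝ} (hτ : 1 ≤ τ.im) (hε : ε ≤ π)
    (hz : 2 * π * |z.im| ≤ ε * τ.im) {k : ℤ} {n : ℕ} (hk : k.natAbs = n + 1) :
    ‖jacobiTheta₂_term k z τ‖ ≤ rexp (-(π - ε) * τ.im) * rexp (-π) ^ n := by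
  have hm : |(k : ℝ)| = n + 1 := by
    rw [← Int.cast_abs, Int.abs_eq_natAbs, hk]; push_cast; ring
  have hk2 : (k : ℝ) ^ 2 = (n + 1) ^ 2 := by rw [← sq_abs, hm]
  have hcross : -(2 * π * k * z.im) ≤ (n + 1) * (ε * τ.im) := by
    have h := neg_le_abs (2 * π * (k : ℝ) * z.im)
    rw [abs_mul, abs_mul, abs_mul, abs_two, abs_of_pos pi_pos, hm] at h
    nlinarith
  -- the exponent at |k| = n + 1 lies n((n + 2)π - ε) im τ below the one at |k| = 1
  have hgap : n * π ≤ n * ((n + 2) * π - ε) * τ.im := by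
    have hn : (0 : ℝ) ≤ n := n.cast_nonneg
    have hπ : π ≤ (n + 2) * π - ε := by nlinarith [pi_pos]
    have hπτ : π ≤ ((n + 2) * π - ε) * τ.im := by nlinarith [pi_pos]
    nlinarith
  rw [norm_jacobiTheta₂_term, ← Real.exp_nat_mul, ← Real.exp_add, Real.exp_le_exp, hk2]
  linarith

lemma norm_jacobiTheta₂_sub_one_le {z τ : ℂ} {ε : ℝ} (hτ : 1 ≤ τ.im) (hε : ε ≤ π)
    (hz : 2 * π * |z.im| ≤ ε * τ.im) :
    ‖jacobiTheta₂ z τ - 1‖ ≤ 2 / (1 - rexp (-π)) * rexp (-(π - ε) * τ.im) := by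
  set c := rexp (-(π - ε) * τ.im)
  have hpairs : HasSum (fun n : ℕ ↦ jacobiTheta₂_term (n + 1) z τ + jacobiTheta₂_term (-(n + 1)) z τ)
      (jacobiTheta₂ z τ - 1) := by
    have := (hasSum_jacobiTheta₂_term z (by linarith : 0 < τ.im)).nat_add_neg
    rw [← hasSum_nat_add_iff' 1] at this
    simpa [Finset.sum_range_one, jacobiTheta₂_term, sub_add_eq_sub_sub] using this
  have hgeom : HasSum (fun n : ℕ ↦ 2 * c * rexp (-π) ^ n) (2 / (1 - rexp (-π)) * c) := by
    rw [show 2 / (1 - rexp (-π)) * c = 2 * c * (1 - rexp (-π))⁻¹ by ring]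
    exact (hasSum_geometric_of_lt_one (exp_pos _).le
      (exp_lt_one_iff.mpr (neg_lt_zero.mpr pi_pos))).mul_left (2 * c)
  refine hpairs.norm_le_of_bounded hgeom fun n ↦ (norm_add_le _ _).trans ?_
  rw [two_mul, add_mul]
  gcongr <;> apply norm_jacobiTheta₂_term_le_of_natAbs_eq hτ hε hz <;> omega

lemma neg_I_mul_tsum_theta1_eq_jacobiTheta₂ (t : ℝ) (w : ℂ) :
    -I * ∑' n : ℤ, (-1 : ℂ) ^ n * cexp (-(π : ℂ) * t * (n + 1/2) ^ 2) *
        cexp ((2 * n + 1) * π * I * (1/2 + w)) =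
      cexp (π * I * w - π * t / 4) * jacobiTheta₂ (w + t * I / 2) (t * I) := by
  have hterm (n : ℤ) : (-1 : ℂ) ^ n * cexp (-(π : ℂ) * t * (n + 1/2) ^ 2) *
      cexp ((2 * n + 1) * π * I * (1/2 + w)) =
      I * cexp (π * I * w - π * t / 4) * jacobiTheta₂_term n (w + t * I / 2) (t * I) := by
    have hsign : (-1 : ℂ) ^ n = cexp (n * (π * I)) := by rw [exp_int_mul, exp_pi_mul_I]
    have hI : I * cexp (π * I * w - π * t / 4) = cexp (π / 2 * I + (π * I * w - π * t / 4)) := by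
      simp [Complex.exp_add, exp_mul_I]
    rw [jacobiTheta₂_term, hsign, hI, ← Complex.exp_add, ← Complex.exp_add, ← Complex.exp_add,
      exp_eq_exp_iff_exists_int]
    exact ⟨n, by linear_combination (-(π : ℂ) * t * n ^ 2 - π * t * n) * I_sq⟩
  rw [tsum_congr hterm, tsum_mul_left, jacobiTheta₂, ← mul_assoc, ← mul_assoc, neg_mul,
    I_mul_I, neg_neg, one_mul]

lemma jacobiTheta₂_add_half_mul_I {t : ℝ} (ht : 0 < t) (w : ℂ) :
    jacobiTheta₂ (w + t * I / 2) (t * I) =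
      cexp (-π * w ^ 2 / t - π * I * w + π * t / 4) / (√t : ℂ) *
        jacobiTheta₂ (1/2 - w * I / t) (I / t) := by
  have ht0 : (t : ℂ) ≠ 0 := ofReal_ne_zero.mpr ht.ne'
  have hsqrt : (-I * (t * I)) ^ (1/2 : ℂ) = (√t : ℂ) := by
    rw [show -I * (t * I) = (t : ℂ) by linear_combination (-(t : ℂ)) * I_sq,
      show (1/2 : ℂ) = ((1/2 : ℝ) : ℂ) by norm_num, ← ofReal_cpow ht.le, sqrt_eq_rpow]
  have hexp : -π * I * (w + t * I / 2) ^ 2 / (t * I) = -π * w ^ 2 / t - π * I * w + π * t / 4 := by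
    field_simp
    linear_combination (-4 * (t : ℂ) ^ 2) * I_sq
  have hz : (w + t * I / 2) / (t * I) = 1/2 - w * I / t := by
    field_simp
    linear_combination (2 * w) * I_sq
  have hτ : -1 / (t * I) = I / t := by
    field_simp
    linear_combination (-1 : ℂ) * I_sq
  rw [jacobiTheta₂_functional_equation, hsqrt, hexp, hz, hτ, one_div_mul_eq_div, mul_div_right_comm]

lemma sqrt_mul_theta1_eq_jacobiTheta₂ {t : ℝ} (ht : 0 < t) (w : ℂ) :
    (√t : ℂ) * (-I * ∑' n : ℤ, (-1 : ℂ) ^ n * cexp (-(π : ℂ) * t * (n + 1/2) ^ 2) *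
        cexp ((2 * n + 1) * π * I * (1/2 + w))) =
      cexp (-π * w ^ 2 / t) * jacobiTheta₂ (1/2 - w * I / t) (I / t) := by
  have hsqrt : (√t : ℂ) ≠ 0 := ofReal_ne_zero.mpr (sqrt_pos.mpr ht).ne'
  rw [neg_I_mul_tsum_theta1_eq_jacobiTheta₂, jacobiTheta₂_add_half_mul_I ht, ← mul_assoc,
    ← mul_assoc, mul_div_assoc', mul_assoc (√t : ℂ), mul_div_cancel_left₀ _ hsqrt,
    ← Complex.exp_add]
  ring_nf

lemma norm_jacobiTheta₂_half_sub_mul_I_sub_one_le {t u ε : ℝ} (ht : 0 < t) (ht1 : t ≤ 1)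
    (hε : ε ≤ π) (hu : 2 * π * |u| ≤ ε) :
    ‖jacobiTheta₂ (1/2 - u * I / t) (I / t) - 1‖ ≤
      2 / (1 - rexp (-π)) * rexp (-(π - ε) / t) := by
  have hτ : (I / t).im = 1 / t := by simp
  have hz : (1/2 - u * I / t).im = -(u / t) := by simp
  rw [div_eq_mul_one_div (-(π - ε)), ← hτ]
  refine norm_jacobiTheta₂_sub_one_le (by rw [hτ]; exact (one_le_div ht).mpr ht1) hε ?_
  rw [hz, hτ, abs_neg, abs_div, abs_of_pos ht, ← mul_div_assoc, mul_one_div]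
  gcongr

lemma two_mul_pi_mul_sqrt_mul_lt {C ε t : ℝ} (hC : 0 < C) (hε : 0 < ε)
    (ht : t < ε ^ 2 / (4 * π ^ 2 * C ^ 2)) : 2 * π * √t * C < ε := by
  have hsqrt : √t < ε / (2 * π * C) := by
    rw [sqrt_lt' (by positivity), div_pow]
    convert ht using 2
    ring
  rw [lt_div_iff₀ (by positivity)] at hsqrt
  linarith

theorem theta1_normal_limit (C x ε t : ℝ) (hC : 0 < C) (hx : |x| ≤ C)
    (hε₁ : 0 < ε) (hε₂ : ε < min 1 (2 * C))
    (ht : 0 < t) (ht' : t < ε ^ 2 / (4 * π ^ 2 * C ^ 2)) :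
    ∃ R : ℂ,
      (Real.sqrt t : ℂ) *
          (-Complex.I * ∑' n : ℤ, (-1 : ℂ) ^ n *
            Complex.exp (-(π : ℂ) * t * (n + 1/2) ^ 2) *
            Complex.exp ((2 * n + 1) * π * Complex.I * (1/2 + Real.sqrt t * x)))
        = Real.exp (-π * x ^ 2) * (1 + R) ∧
      ‖R‖ ≤ (4 - 2 * Real.exp (-π)) / (1 - Real.exp (-π)) *
        Real.exp (-(π - ε) / t) := by
  refine ⟨jacobiTheta₂ (1/2 - (√t * x : ℝ) * I / t) (I / t) - 1, ?_, ?_⟩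
  · have hu2 : ((√t * x : ℝ) : ℂ) ^ 2 / t = x ^ 2 := by
      rw [← ofReal_pow, ← ofReal_div, mul_pow, sq_sqrt ht.le, mul_div_cancel_left₀ _ ht.ne']
      push_cast; rfl
    rw [← ofReal_mul, sqrt_mul_theta1_eq_jacobiTheta₂ ht, mul_div_assoc, hu2, ofReal_exp]
    push_cast
    ring
  · have hε : ε < 1 := hε₂.trans_le (min_le_left _ _)
    have hsC := two_mul_pi_mul_sqrt_mul_lt hC hε₁ ht'
    have hu : 2 * π * |√t * x| ≤ ε := by
      rw [abs_mul, abs_of_nonneg (sqrt_nonneg t)]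
      nlinarith [mul_le_mul_of_nonneg_left hx (by positivity : 0 ≤ 2 * π * √t)]
    have ht1 : t ≤ 1 := by
      have hs1 : √t < 1 := by
        by_contra! h
        nlinarith [hε₂.trans_le (min_le_right _ _), pi_gt_three,
          mul_le_mul_of_nonneg_left h (by positivity : 0 ≤ 2 * π * C)]
      simpa using ((sqrt_lt' one_pos).mp hs1).le
    refine (norm_jacobiTheta₂_half_sub_mul_I_sub_one_le ht ht1 (by linarith [pi_gt_three]) hu).trans ?_
    have hr : rexp (-π) < 1 := exp_lt_one_iff.mpr (neg_lt_zero.mpr pi_pos)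
    gcongr
    linarith
end

section
/- For each fixed x ∈ ℝ, the function t ↦ √t · θ₃(√t·x | it) tends to e^{-πx²} as t → 0⁺; moreover, for |x| ≤ C the convergence is uniform in x. -/
/-!
Poisson summation turns `√t · θ₃(√t x | it)` into the shifted Gaussian sum
`∑ₙ exp(-π (n - √t x)² / t)`, whose `n = 0` term is exactly `exp(-π x²)`. Once `|√t x| ≤ 1/2`,
every term is at most `exp(-π n² / (4t))`, so the error is bounded, uniformly in `x`, by
`θ₃(0 | i/(4t)) - 1`, which tends to `0` as `t → 0⁺` by dominated convergence.
-/

open Real Complex Filter Topology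

lemma tendstoUniformlyOn_of_dist_le {ι β α : Type*} [PseudoMetricSpace α] {F : ι → β → α}
    {f : β → α} {p : Filter ι} {s : Set β} {g : ι → ℝ} (hg : Tendsto g p (𝓝 0))
    (hdist : ∀ᶠ i in p, ∀ x ∈ s, dist (f x) (F i x) ≤ g i) : TendstoUniformlyOn F f p s :=
  Metric.tendstoUniformlyOn_iff.2 fun ε hε ↦ by
    filter_upwards [hdist, hg.eventually (gt_mem_nhds hε)] with i hi hgi x hx
    exact (hi x hx).trans_lt hgi

lemma abs_tsum_sub_le_tsum_sub {β : Type*} {f g : β → ℝ} (hf : 0 ≤ f) (hfg : f ≤ g)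
    (hg : Summable g) (b : β) : |∑' i, f i - f b| ≤ ∑' i, g i - g b := by
  have hf_sum : Summable f := hg.of_nonneg_of_le hf hfg
  have hgf : g b - f b ≤ ∑' i, (g i - f i) :=
    (hg.sub hf_sum).le_tsum b fun i _ ↦ sub_nonneg.2 (hfg i)
  rw [hg.tsum_sub hf_sum] at hgf
  rw [abs_of_nonneg (sub_nonneg.2 (hf_sum.le_tsum b fun i _ ↦ hf i))]
  linarith

lemma summable_exp_neg_mul_int_sq {s : ℝ} (hs : 0 < s) :
    Summable fun n : ℤ ↦ rexp (-π * s * n ^ 2) := by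
  simpa [mul_assoc] using summable_pow_mul_jacobiTheta₂_term_bound 0 hs 0

lemma tendsto_tsum_exp_neg_mul_int_sq_atTop :
    Tendsto (fun s : ℝ ↦ ∑' n : ℤ, rexp (-π * s * n ^ 2)) atTop (𝓝 1) := by
  have hlim (n : ℤ) : Tendsto (fun s : ℝ ↦ rexp (-π * s * n ^ 2)) atTop
      (𝓝 (if n = 0 then 1 else 0)) := by
    split_ifs with hn
    · simp [hn]
    · have hn2 : (0 : ℝ) < (n : ℝ) ^ 2 := by positivity
      exact Real.tendsto_exp_atBot.comp
        ((tendsto_id.const_mul_atTop_of_neg (neg_neg_of_pos pi_pos)).atBot_mul_const hn2)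
  have hbound : ∀ᶠ s : ℝ in atTop, ∀ n : ℤ, ‖rexp (-π * s * n ^ 2)‖ ≤ rexp (-π * 1 * n ^ 2) := by
    filter_upwards [eventually_ge_atTop 1] with s hs n
    rw [Real.norm_eq_abs, abs_of_pos (exp_pos _), exp_le_exp]
    nlinarith [mul_nonneg (mul_nonneg pi_pos.le (sub_nonneg.2 hs)) (sq_nonneg (n : ℝ))]
  simpa using
    tendsto_tsum_of_dominated_convergence (summable_exp_neg_mul_int_sq one_pos) hlim hbound

lemma sq_le_four_mul_sub_sq (n : ℤ) {a : ℝ} (ha : |a| ≤ 1 / 2) :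
    (n : ℝ) ^ 2 ≤ 4 * (n - a) ^ 2 := by
  rw [abs_le] at ha
  rcases lt_trichotomy n 0 with hn | rfl | hn
  · have : (n : ℝ) ≤ -1 := by exact_mod_cast Int.le_sub_one_of_lt hn
    nlinarith
  · push_cast; nlinarith [sq_nonneg a]
  · have : (1 : ℝ) ≤ n := by exact_mod_cast hn
    nlinarith

lemma exp_neg_div_mul_sub_sq_le {t a : ℝ} (ht : 0 < t) (ha : |a| ≤ 1 / 2) (n : ℤ) :
    rexp (-π / t * (n - a) ^ 2) ≤ rexp (-π * (t⁻¹ / 4) * n ^ 2) := by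
  rw [exp_le_exp, show -π * (t⁻¹ / 4) * n ^ 2 = -π / t * (n ^ 2 / 4) by ring]
  exact mul_le_mul_of_nonpos_left (by linarith [sq_le_four_mul_sub_sq n ha])
    (div_nonpos_of_nonpos_of_nonneg (neg_nonpos.2 pi_pos.le) ht.le)

lemma sqrt_mul_tsum_cexp_eq_tsum_exp_neg_div_mul_sub_sq {t : ℝ} (ht : 0 < t) (a : ℝ) :
    (√t : ℂ) * ∑' n : ℤ, cexp (-π * t * n ^ 2 + 2 * π * I * n * a) =
      ((∑' n : ℤ, rexp (-π / t * (n - a) ^ 2) : ℝ) : ℂ) := by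
  have hpoisson := Complex.tsum_exp_neg_quadratic (a := t) (by simpa using ht) (I * a)
  have hsqrt : (t : ℂ) ^ (1 / 2 : ℂ) = √t := by
    rw [Real.sqrt_eq_rpow, ofReal_cpow ht.le]
    norm_num
  have hsqrt_ne : (√t : ℂ) ≠ 0 := ofReal_ne_zero.2 (Real.sqrt_pos.2 ht).ne'
  calc (√t : ℂ) * ∑' n : ℤ, cexp (-π * t * n ^ 2 + 2 * π * I * n * a)
      = (√t : ℂ) * ∑' n : ℤ, cexp (-π * t * n ^ 2 + 2 * π * (I * a) * n) := by
        congr! 4 with n; ring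
    _ = ∑' n : ℤ, cexp (-π / t * (n + I * (I * a)) ^ 2) := by
        rw [hpoisson, hsqrt, ← mul_assoc, mul_one_div_cancel hsqrt_ne, one_mul]
    _ = ((∑' n : ℤ, rexp (-π / t * (n - a) ^ 2) : ℝ) : ℂ) := by
        rw [ofReal_tsum]
        refine tsum_congr fun n ↦ ?_
        push_cast
        rw [← mul_assoc, I_mul_I, neg_one_mul, ← sub_eq_add_neg]

lemma dist_gaussian_sqrt_mul_theta_le {t x : ℝ} (ht : 0 < t) (hx : |√t * x| ≤ 1 / 2) :
    dist ((rexp (-π * x ^ 2) : ℝ) : ℂ)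
        ((√t : ℂ) * ∑' n : ℤ, cexp (-π * t * n ^ 2 + 2 * π * I * n * (√t * x))) ≤
      ∑' n : ℤ, rexp (-π * (t⁻¹ / 4) * n ^ 2) - 1 := by
  have hgauss : -π / t * ((0 : ℤ) - √t * x) ^ 2 = -π * x ^ 2 := by
    rw [Int.cast_zero, zero_sub, neg_sq, mul_pow, Real.sq_sqrt ht.le]
    field_simp
  have htail := abs_tsum_sub_le_tsum_sub (fun n ↦ (exp_pos _).le)
    (exp_neg_div_mul_sub_sq_le ht hx) (summable_exp_neg_mul_int_sq (by positivity)) 0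
  rw [hgauss, Int.cast_zero, zero_pow two_ne_zero, mul_zero, Real.exp_zero] at htail
  rwa [dist_comm, dist_eq_norm, ← ofReal_mul,
    sqrt_mul_tsum_cexp_eq_tsum_exp_neg_div_mul_sub_sq ht, ← ofReal_sub, norm_real,
    Real.norm_eq_abs]

lemma tendstoUniformlyOn_sqrt_mul_theta_gaussian (C : ℝ) :
    TendstoUniformlyOn
      (fun t x : ℝ ↦ (√t : ℂ) * ∑' n : ℤ, cexp (-π * t * n ^ 2 + 2 * π * I * n * (√t * x)))
      (fun x : ℝ ↦ ((rexp (-π * x ^ 2) : ℝ) : ℂ)) (𝓝[>] 0) {x : ℝ | |x| ≤ C} := by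
  have hbound_lim : Tendsto (fun t : ℝ ↦ ∑' n : ℤ, rexp (-π * (t⁻¹ / 4) * n ^ 2) - 1)
      (𝓝[>] 0) (𝓝 0) := by
    simpa using (tendsto_tsum_exp_neg_mul_int_sq_atTop.comp
      (tendsto_inv_nhdsGT_zero.atTop_div_const four_pos)).sub_const 1
  have hshift_small : ∀ᶠ t : ℝ in 𝓝[>] 0, √t * C ≤ 1 / 2 := by
    refine eventually_nhdsWithin_of_eventually_nhds ?_
    have : Tendsto (fun t : ℝ ↦ √t * C) (𝓝 0) (𝓝 0) := by
      simpa using (Real.continuous_sqrt.tendsto 0).mul_const C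
    exact this.eventually (ge_mem_nhds one_half_pos)
  refine tendstoUniformlyOn_of_dist_le hbound_lim ?_
  filter_upwards [self_mem_nhdsWithin, hshift_small] with t (ht : 0 < t) htC x (hx : |x| ≤ C)
  refine dist_gaussian_sqrt_mul_theta_le ht ?_
  rw [abs_mul, abs_of_nonneg (Real.sqrt_nonneg t)]
  exact (mul_le_mul_of_nonneg_left hx (Real.sqrt_nonneg t)).trans htC

theorem theta3_tendsto_gaussian :
    (∀ x : ℝ, Filter.Tendsto
        (fun t : ℝ => (Real.sqrt t : ℂ) *
          ∑' n : ℤ, Complex.exp (-(π : ℂ) * t * n ^ 2 +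
            2 * π * Complex.I * n * (Real.sqrt t * x)))
        (nhdsWithin 0 (Set.Ioi 0))
        (nhds ((Real.exp (-π * x ^ 2) : ℝ) : ℂ))) ∧
    (∀ C : ℝ, 0 < C → TendstoUniformlyOn
        (fun (t : ℝ) (x : ℝ) => (Real.sqrt t : ℂ) *
          ∑' n : ℤ, Complex.exp (-(π : ℂ) * t * n ^ 2 +
            2 * π * Complex.I * n * (Real.sqrt t * x)))
        (fun x : ℝ => ((Real.exp (-π * x ^ 2) : ℝ) : ℂ))
        (nhdsWithin 0 (Set.Ioi 0))
        {x : ℝ | |x| ≤ C}) :=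
  ⟨fun x ↦ (tendstoUniformlyOn_sqrt_mul_theta_gaussian |x|).tendsto_at (le_refl |x|),
    fun C _ ↦ tendstoUniformlyOn_sqrt_mul_theta_gaussian C⟩
end
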